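/- (Merge Theorem) Let 𝓘 be an implementation of an object O that is consistent under a well-behaved memory model M. Suppose there exist π0 ∈ traces(𝓘) and complete histories h1, h2 of O such that, writing h0 = π0|_obj and σ0 = π0|_mem: (i) h0 ∈ spec(O), σ0 ∈ traces(SCM), and procs(h1) ∩ procs(h2) = ∅; (ii) for i ∈ {1,2}, 𝓘 is available after h0 w.r.t. some complete sequential history h_seq^i with h_i ⊑ h_seq^i; (iii) h1 and h2 are not weakly (resp. strongly) mergeable in spec(O) after h0. Then there exist π1 and π2 such that: (a) for i ∈ {1,2}, π0·π_i ∈ traces(𝓘), π_i|_obj = h_i, σ0·(π_i|_mem) ∈ traces(SCM), and procs(π_i) = procs(h_i); and (b) for every sproc-reordering π1' of π1 and sproc-reordering π2' of π2 with π1'|_obj = h1, π2'|_obj = h2, and σ0·(π1'|_mem), σ0·(π2'|_mem) ∈ traces(SCM), the sequences π1'|_mem and π2'|_mem are not weakly (resp. strongly) mergeable in M; in particular, π1|_mem and π2|_mem are not weakly (resp. strongly) mergeable in M. -/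

import Mathlib

set_option autoImplicit false

namespace WMM

universe u v

/-! ### Memory actions and events -/

inductive MemAct (Var Val : Type) : Type where
  | write (x : Var) (v : Val)
  | read (x : Var) (v : Val)
  | rmw (x : Var) (vold vnew : Val)
  | fence

structure MemEv (Proc Var Val : Type) : Type where
  proc : Proc
  act : MemAct Var Val

section Mem

variable {Proc Var Val : Type}

def MemEv.isWrite (e : MemEv Proc Var Val) : Prop := ∃ x v, e.act = MemAct.write x v
def MemEv.isRead (e : MemEv Proc Var Val) : Prop := ∃ x v, e.act = MemAct.read x v
def MemEv.isRMW (e : MemEv Proc Var Val) : Prop := ∃ x v w, e.act = MemAct.rmw x v w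
def MemEv.isFence (e : MemEv Proc Var Val) : Prop := e.act = MemAct.fence

/-- The set of processes appearing in an observable memory sequence. -/
def memProcs (σ : List (MemEv Proc Var Val)) : Set Proc := {p | ∃ e ∈ σ, MemEv.proc e = p}

end Mem

/-! ### Shuffles -/

/-- `Shuffle s1 s2 s` means `s` is an interleaving of `s1` and `s2`. -/
inductive Shuffle {α : Type u} : List α → List α → List α → Prop where
  | nil : Shuffle [] [] []
  | left {s1 s2 s : List α} (x : α) : Shuffle s1 s2 s → Shuffle (s1 ++ [x]) s2 (s ++ [x])
  | right {s1 s2 s : List α} (x : α) : Shuffle s1 s2 s → Shuffle s1 (s2 ++ [x]) (s ++ [x])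

/-! ### Paths of a labeled transition relation -/

inductive LTSPath {S : Type u} {L : Type v} (step : S → L → S → Prop) : S → List L → S → Prop where
  | nil (s : S) : LTSPath step s [] s
  | cons {s s' s'' : S} {l : L} {ls : List L} :
      step s l s' → LTSPath step s' ls s'' → LTSPath step s (l :: ls) s''

/-! ### Memory models -/

/-- A memory model: an LTS whose labels are memory events or the silent label `τ = none`. -/
structure MemModel (Proc Var Val : Type) : Type 1 where
  State : Type
  init : State
  step : State → Option (MemEv Proc Var Val) → State → Prop

section MemModel

variable {Proc Var Val : Type}

/-- A state is stable if no silent (`τ`) transition is enabled. -/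
def MemModel.Stable (M : MemModel Proc Var Val) (q : M.State) : Prop :=
  ∀ q', ¬ M.step q none q'

/-- Observable memory sequences from a state: traces with `τ` steps erased. -/
def MemModel.OTraces (M : MemModel Proc Var Val) (q : M.State) :
    Set (List (MemEv Proc Var Val)) :=
  {σ | ∃ (π : List (Option (MemEv Proc Var Val))) (q' : M.State),
      LTSPath M.step q π q' ∧ π.reduceOption = σ}

def WeaklyMergeable (M : MemModel Proc Var Val) (σ1 σ2 : List (MemEv Proc Var Val)) : Prop :=
  ∀ q0 : M.State, M.Stable q0 → σ1 ∈ M.OTraces q0 → σ2 ∈ M.OTraces q0 →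
    ∃ σ, Shuffle σ1 σ2 σ ∧ σ ∈ M.OTraces q0

def StronglyMergeable (M : MemModel Proc Var Val) (σ1 σ2 : List (MemEv Proc Var Val)) : Prop :=
  ∀ q0 : M.State, M.Stable q0 → σ1 ∈ M.OTraces q0 → σ2 ∈ M.OTraces q0 →
    ∀ σ, Shuffle σ1 σ2 σ → σ ∈ M.OTraces q0

/-- Weak/strong mergeability, selected by a Boolean flag. -/
def MemMergeable (strong : Bool) (M : MemModel Proc Var Val)
    (σ1 σ2 : List (MemEv Proc Var Val)) : Prop :=
  if strong then StronglyMergeable M σ1 σ2 else WeaklyMergeable M σ1 σ2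

end MemModel

/-! ### The SCM, TSO and RA memory models -/

section Models

variable (Proc Var Val : Type)

inductive SCMStep [DecidableEq Var] :
    (Var → Val) → Option (MemEv Proc Var Val) → (Var → Val) → Prop where
  | write (m : Var → Val) (p : Proc) (x : Var) (v : Val) :
      SCMStep m (some ⟨p, MemAct.write x v⟩) (Function.update m x v)
  | read (m : Var → Val) (p : Proc) (x : Var) :
      SCMStep m (some ⟨p, MemAct.read x (m x)⟩) m
  | rmw (m : Var → Val) (p : Proc) (x : Var) (vnew : Val) :
      SCMStep m (some ⟨p, MemAct.rmw x (m x) vnew⟩) (Function.update m x vnew)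
  | fence (m : Var → Val) (p : Proc) :
      SCMStep m (some ⟨p, MemAct.fence⟩) m

def SCMModel [DecidableEq Var] [Zero Val] : MemModel Proc Var Val where
  State := Var → Val
  init := fun _ => 0
  step := SCMStep Proc Var Val

inductive TSOStep [DecidableEq Proc] [DecidableEq Var] :
    (Var → Val) × (Proc → List (Var × Val)) → Option (MemEv Proc Var Val) →
      (Var → Val) × (Proc → List (Var × Val)) → Prop where
  | write (m : Var → Val) (b : Proc → List (Var × Val)) (p : Proc) (x : Var) (v : Val) :
      TSOStep (m, b) (some ⟨p, MemAct.write x v⟩)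
        (m, Function.update b p (b p ++ [(x, v)]))
  | readBuffer (m : Var → Val) (b : Proc → List (Var × Val)) (p : Proc) (x : Var) (v : Val) :
      ((b p).filter (fun pr => decide (pr.1 = x))).getLast? = some (x, v) →
      TSOStep (m, b) (some ⟨p, MemAct.read x v⟩) (m, b)
  | readMemory (m : Var → Val) (b : Proc → List (Var × Val)) (p : Proc) (x : Var) :
      (b p).filter (fun pr => decide (pr.1 = x)) = [] →
      TSOStep (m, b) (some ⟨p, MemAct.read x (m x)⟩) (m, b)
  | rmw (m : Var → Val) (b : Proc → List (Var × Val)) (p : Proc) (x : Var) (vnew : Val) :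
      b p = [] →
      TSOStep (m, b) (some ⟨p, MemAct.rmw x (m x) vnew⟩) (Function.update m x vnew, b)
  | fence (m : Var → Val) (b : Proc → List (Var × Val)) (p : Proc) :
      b p = [] → TSOStep (m, b) (some ⟨p, MemAct.fence⟩) (m, b)
  | propagate (m : Var → Val) (b : Proc → List (Var × Val)) (p : Proc) (x : Var) (v : Val)
      (β : List (Var × Val)) :
      b p = (x, v) :: β →
      TSOStep (m, b) none (Function.update m x v, Function.update b p β)

def TSOModel [DecidableEq Proc] [DecidableEq Var] [Zero Val] : MemModel Proc Var Val where
  State := (Var → Val) × (Proc → List (Var × Val))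
  init := (fun _ => 0, fun _ => [])
  step := TSOStep Proc Var Val

/-- A message of the RA memory model. -/
structure RAMsg (Var Val : Type) : Type where
  var : Var
  val : Val
  time : ℕ
  view : Var → ℕ

structure RAState (Proc Var Val : Type) : Type where
  mem : Set (RAMsg Var Val)
  view : Proc → Var → ℕ
  fview : Var → ℕ

end Models

/-- Pointwise join (maximum) of two views. -/
def viewJoin {Var : Type} (V1 V2 : Var → ℕ) : Var → ℕ := fun y => max (V1 y) (V2 y)

section RA

variable (Proc Var Val : Type)

inductive RAStep [DecidableEq Proc] [DecidableEq Var] :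
    RAState Proc Var Val → Option (MemEv Proc Var Val) → RAState Proc Var Val → Prop where
  | write (s : RAState Proc Var Val) (p : Proc) (x : Var) (v : Val) (t : ℕ) :
      s.view p x < t →
      (∀ μ ∈ s.mem, μ.var = x → μ.time ≠ t) →
      RAStep s (some ⟨p, MemAct.write x v⟩)
        ⟨insert ⟨x, v, t, Function.update (s.view p) x t⟩ s.mem,
         Function.update s.view p (Function.update (s.view p) x t), s.fview⟩
  | read (s : RAState Proc Var Val) (p : Proc) (x : Var) (v : Val) (V : Var → ℕ) :
      (⟨x, v, s.view p x, V⟩ : RAMsg Var Val) ∈ s.mem →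
      RAStep s (some ⟨p, MemAct.read x v⟩) s
  | rmw (s : RAState Proc Var Val) (p : Proc) (x : Var) (vexp vnew : Val) (V : Var → ℕ) :
      (⟨x, vexp, s.view p x, V⟩ : RAMsg Var Val) ∈ s.mem →
      (∀ μ ∈ s.mem, μ.var = x → μ.time ≠ s.view p x + 1) →
      RAStep s (some ⟨p, MemAct.rmw x vexp vnew⟩)
        ⟨insert ⟨x, vnew, s.view p x + 1, Function.update (s.view p) x (s.view p x + 1)⟩ s.mem,
         Function.update s.view p (Function.update (s.view p) x (s.view p x + 1)), s.fview⟩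
  | fence (s : RAState Proc Var Val) (p : Proc) :
      RAStep s (some ⟨p, MemAct.fence⟩)
        ⟨s.mem, Function.update s.view p (viewJoin (s.view p) s.fview),
         viewJoin (s.view p) s.fview⟩
  | propagate (s : RAState Proc Var Val) (p : Proc) (μ : RAMsg Var Val) :
      μ ∈ s.mem → s.view p μ.var < μ.time →
      RAStep s none
        ⟨s.mem, Function.update s.view p (viewJoin (s.view p) μ.view), s.fview⟩

def RAModel [DecidableEq Proc] [DecidableEq Var] [Zero Val] : MemModel Proc Var Val where
  State := RAState Proc Var Val
  init := ⟨{μ | ∃ x : Var, μ = ⟨x, 0, 0, fun _ => 0⟩}, fun _ _ => 0, fun _ => 0⟩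
  step := RAStep Proc Var Val

end RA

/-! ### Well-behaved memory models -/

section WellBehaved

variable {Proc Var Val : Type}

/-- Reachability by silent steps. -/
def TauReach (M : MemModel Proc Var Val) : M.State → M.State → Prop :=
  Relation.ReflTransGen (fun q q' => M.step q none q')

/-- A memory model is well-behaved if there is a simulation from SCM into its stable states. -/
def WellBehaved [DecidableEq Var] [Zero Val] (M : MemModel Proc Var Val) : Prop :=
  ∃ R : (Var → Val) → M.State → Prop,
    (∀ m q, R m q → M.Stable q) ∧
    R (fun _ => (0 : Val)) M.init ∧
    (∀ m q, R m q → ∀ (l : Option (MemEv Proc Var Val)) (m' : Var → Val),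
      SCMStep Proc Var Val m l m' →
      ∃ q1 q' : M.State, M.step q l q1 ∧ TauReach M q1 q' ∧ M.Stable q' ∧ R m' q')

end WellBehaved

/-! ### Patterns of observable memory sequences -/

section Patterns

variable {Proc Var Val : Type}

def IsSolo (σ : List (MemEv Proc Var Val)) : Prop :=
  ∀ e ∈ σ, ∀ e' ∈ σ, MemEv.proc e = MemEv.proc e'

def IsRW (σ : List (MemEv Proc Var Val)) : Prop :=
  ∀ e ∈ σ, MemEv.isWrite e ∨ MemEv.isRead e

def IsRWF (σ : List (MemEv Proc Var Val)) : Prop :=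
  ∀ e ∈ σ, MemEv.isWrite e ∨ MemEv.isRead e ∨ MemEv.isFence e

/-- Read-before-write: no read-after-write pattern on distinct variables. -/
def IsRBW (σ : List (MemEv Proc Var Val)) : Prop :=
  ∀ (k1 k2 : ℕ) (e1 e2 : MemEv Proc Var Val) (x y : Var) (v w : Val),
    k1 < k2 → σ[k1]? = some e1 → σ[k2]? = some e2 →
    e1.act = MemAct.write x v → e2.act = MemAct.read y w → x ≠ y →
    ∃ (k : ℕ) (e : MemEv Proc Var Val) (u : Val),
      k1 < k ∧ k < k2 ∧ σ[k]? = some e ∧ e.act = MemAct.write y u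

/-- Trailing-fence: no fence is immediately followed by a non-fence event. -/
def IsTF (σ : List (MemEv Proc Var Val)) : Prop :=
  ∀ (k : ℕ) (e e' : MemEv Proc Var Val),
    σ[k]? = some e → σ[k + 1]? = some e' → MemEv.isFence e → MemEv.isFence e'

/-- Leading-fence: no fence is immediately preceded by a non-fence event. -/
def IsLF (σ : List (MemEv Proc Var Val)) : Prop :=
  ∀ (k : ℕ) (e e' : MemEv Proc Var Val),
    σ[k]? = some e → σ[k + 1]? = some e' → MemEv.isFence e' → MemEv.isFence e

def IsLTF (σ : List (MemEv Proc Var Val)) : Prop :=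
  ∃ σ' σ'' : List (MemEv Proc Var Val), σ = σ' ++ σ'' ∧ IsLF σ' ∧ IsTF σ''

def IsPPTF [DecidableEq Proc] (σ : List (MemEv Proc Var Val)) : Prop :=
  ∀ p : Proc, IsTF (σ.filter (fun e => decide (e.proc = p)))

def IsPPLF [DecidableEq Proc] (σ : List (MemEv Proc Var Val)) : Prop :=
  ∀ p : Proc, IsLF (σ.filter (fun e => decide (e.proc = p)))

end Patterns

/-! ### Objects, events and histories -/

inductive ObjAct (Op Ret : Type) : Type where
  | inv (o : Op)
  | res (u : Ret)

structure ObjEv (Proc Op Ret : Type) : Type where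
  proc : Proc
  act : ObjAct Op Ret

inductive EvAct (Var Val Op Ret : Type) : Type where
  | mem (a : MemAct Var Val)
  | inv (o : Op)
  | res (u : Ret)

/-- A general event: a memory event or an object event of some process. -/
structure Ev (Proc Var Val Op Ret : Type) : Type where
  proc : Proc
  act : EvAct Var Val Op Ret

section Events

variable {Proc Var Val Op Ret : Type}

def ObjAct.isInv : ObjAct Op Ret → Prop
  | ObjAct.inv _ => True
  | _ => False

def ObjAct.isRes : ObjAct Op Ret → Prop
  | ObjAct.res _ => True
  | _ => False

def Ev.toMem : Ev Proc Var Val Op Ret → Option (MemEv Proc Var Val)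
  | ⟨p, EvAct.mem a⟩ => some ⟨p, a⟩
  | _ => none

def Ev.toObj : Ev Proc Var Val Op Ret → Option (ObjEv Proc Op Ret)
  | ⟨p, EvAct.inv o⟩ => some ⟨p, ObjAct.inv o⟩
  | ⟨p, EvAct.res u⟩ => some ⟨p, ObjAct.res u⟩
  | _ => none

/-- Restriction of an event sequence to its memory events. -/
def restrictMem (π : List (Ev Proc Var Val Op Ret)) : List (MemEv Proc Var Val) :=
  π.filterMap Ev.toMem

/-- Restriction of an event sequence to its object events. -/
def restrictObj (π : List (Ev Proc Var Val Op Ret)) : List (ObjEv Proc Op Ret) :=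
  π.filterMap Ev.toObj

def procsEv (π : List (Ev Proc Var Val Op Ret)) : Set Proc := {p | ∃ e ∈ π, Ev.proc e = p}

def procsObj (h : List (ObjEv Proc Op Ret)) : Set Proc := {p | ∃ e ∈ h, ObjEv.proc e = p}

def Ev.isWriteEv (e : Ev Proc Var Val Op Ret) : Prop :=
  ∃ x v, e.act = EvAct.mem (MemAct.write x v)

def Ev.isReadEv (e : Ev Proc Var Val Op Ret) : Prop :=
  ∃ x v, e.act = EvAct.mem (MemAct.read x v)

def Ev.isResEv (e : Ev Proc Var Val Op Ret) : Prop := ∃ u, e.act = EvAct.res u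

def Ev.isFenceEv (e : Ev Proc Var Val Op Ret) : Prop := e.act = EvAct.mem MemAct.fence

/-- The two-event history `⟨p : o ⇒ u⟩`. -/
def invres (p : Proc) (o : Op) (u : Ret) : List (ObjEv Proc Op Ret) :=
  [⟨p, ObjAct.inv o⟩, ⟨p, ObjAct.res u⟩]

/-- Complete sequential histories: concatenations of matching invocation–response pairs. -/
inductive CompleteSeq : List (ObjEv Proc Op Ret) → Prop where
  | nil : CompleteSeq []
  | cons (p : Proc) (o : Op) (u : Ret) {h : List (ObjEv Proc Op Ret)} :
      CompleteSeq h → CompleteSeq (⟨p, ObjAct.inv o⟩ :: ⟨p, ObjAct.res u⟩ :: h)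

/-- Sequential histories: prefixes of complete sequential histories. -/
def Sequential (h : List (ObjEv Proc Op Ret)) : Prop :=
  ∃ h' : List (ObjEv Proc Op Ret), CompleteSeq h' ∧ h <+: h'

def WellFormed [DecidableEq Proc] (h : List (ObjEv Proc Op Ret)) : Prop :=
  ∀ p : Proc, Sequential (h.filter (fun e => decide (e.proc = p)))

/-- Complete histories: well-formed, and each process's restriction is empty or
ends with a response event. -/
def CompleteH [DecidableEq Proc] (h : List (ObjEv Proc Op Ret)) : Prop :=
  WellFormed h ∧
    ∀ p : Proc, h.filter (fun e => decide (e.proc = p)) = [] ∨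
      ∃ e : ObjEv Proc Op Ret,
        (h.filter (fun e => decide (e.proc = p))).getLast? = some e ∧ e.act.isRes

end Events

/-! ### Reorderings and linearization -/

/-- `Reorder R s s'` : `s'` is an `R`-reordering of `s`. -/
def Reorder {α : Type u} (R : α → α → Prop) (s s' : List α) : Prop :=
  ∃ f : Fin s.length ≃ Fin s'.length,
    (∀ i : Fin s.length, s'.get (f i) = s.get i) ∧
    ∀ i j : Fin s.length, i < j → R (s.get i) (s.get j) → f i < f j

section Lin

variable {Proc Var Val Op Ret : Type}

/-- The `sproc` relation on general events: same process. -/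
def sprocEv (e1 e2 : Ev Proc Var Val Op Ret) : Prop := e1.proc = e2.proc

/-- The `lin` relation on object events. -/
def linRel (e1 e2 : ObjEv Proc Op Ret) : Prop :=
  e1.proc = e2.proc ∨ (e1.act.isRes ∧ e2.act.isInv)

/-- `h ⊑ H'`: some history in `H'` linearizes `h`. -/
def LinInto (Spec : Set (List (ObjEv Proc Op Ret))) (h : List (ObjEv Proc Op Ret)) : Prop :=
  ∃ h' ∈ Spec, Reorder linRel h h'

/-- A specification: a prefix-closed set of complete sequential histories. -/
def IsSpec (Spec : Set (List (ObjEv Proc Op Ret))) : Prop :=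
  (∀ h ∈ Spec, CompleteSeq h) ∧
  (∀ h ∈ Spec, ∀ h' : List (ObjEv Proc Op Ret), h' <+: h → CompleteSeq h' → h' ∈ Spec)

/-- A deterministic object: no two specification histories have a longest common prefix
ending with an invocation. -/
def Deterministic (Spec : Set (List (ObjEv Proc Op Ret))) : Prop :=
  ∀ h1 ∈ Spec, ∀ h2 ∈ Spec, ∀ (g : List (ObjEv Proc Op Ret)) (p : Proc) (o : Op),
    (g ++ [⟨p, ObjAct.inv o⟩]) <+: h1 → (g ++ [⟨p, ObjAct.inv o⟩]) <+: h2 →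
    ∃ e : ObjEv Proc Op Ret,
      (g ++ [⟨p, ObjAct.inv o⟩, e]) <+: h1 ∧ (g ++ [⟨p, ObjAct.inv o⟩, e]) <+: h2

def WeaklySpecMergeableAfter (Spec : Set (List (ObjEv Proc Op Ret)))
    (h0 h1 h2 : List (ObjEv Proc Op Ret)) : Prop :=
  LinInto Spec (h0 ++ h1) → LinInto Spec (h0 ++ h2) →
    ∃ h, Shuffle h1 h2 h ∧ LinInto Spec (h0 ++ h)

def StronglySpecMergeableAfter (Spec : Set (List (ObjEv Proc Op Ret)))
    (h0 h1 h2 : List (ObjEv Proc Op Ret)) : Prop :=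
  LinInto Spec (h0 ++ h1) → LinInto Spec (h0 ++ h2) →
    ∀ h, Shuffle h1 h2 h → LinInto Spec (h0 ++ h)

def SpecMergeableAfter (strong : Bool) (Spec : Set (List (ObjEv Proc Op Ret)))
    (h0 h1 h2 : List (ObjEv Proc Op Ret)) : Prop :=
  if strong then StronglySpecMergeableAfter Spec h0 h1 h2
  else WeaklySpecMergeableAfter Spec h0 h1 h2

/-- One-sided non-commutativity. -/
def OneSidedNonComm (Spec : Set (List (ObjEv Proc Op Ret))) (o1 o2 : Op) : Prop :=
  ∃ (h0 : List (ObjEv Proc Op Ret)) (p1 p2 : Proc) (u1 v1 u2 : Ret),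
    CompleteSeq h0 ∧ p1 ≠ p2 ∧ u1 ≠ v1 ∧
    h0 ++ invres p1 o1 u1 ∈ Spec ∧
    h0 ++ invres p2 o2 u2 ++ invres p1 o1 v1 ∈ Spec

/-- Two-sided non-commutativity. -/
def TwoSidedNonComm (Spec : Set (List (ObjEv Proc Op Ret))) (o1 o2 : Op) : Prop :=
  ∃ (h0 : List (ObjEv Proc Op Ret)) (p1 p2 : Proc) (u1 v1 u2 v2 : Ret),
    CompleteSeq h0 ∧ p1 ≠ p2 ∧ u1 ≠ v1 ∧ u2 ≠ v2 ∧
    h0 ++ invres p1 o1 u1 ++ invres p2 o2 v2 ∈ Spec ∧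
    h0 ++ invres p2 o2 u2 ++ invres p1 o1 v1 ∈ Spec

end Lin

/-! ### Implementations -/

/-- An implementation of an operation for a process `p`: an LTS labeled by events of `p`
in which a response event is always the last transition. -/
structure OpImpl (Proc Var Val Op Ret : Type) (p : Proc) : Type 1 where
  State : Type
  init : State
  step : State → Ev Proc Var Val Op Ret → State → Prop
  proc_eq : ∀ q e q', step q e q' → Ev.proc e = p
  res_final : ∀ (q : State) (u : Ret) (q' : State),
    step q ⟨p, EvAct.res u⟩ q' → ∀ e q'', ¬ step q' e q''

section Impl

variable {Proc Var Val Op Ret : Type}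

def OpImpl.traces {p : Proc} (Iop : OpImpl Proc Var Val Op Ret p) :
    Set (List (Ev Proc Var Val Op Ret)) :=
  {π | ∃ q : Iop.State, LTSPath Iop.step Iop.init π q}

/-- An implementation of an object. -/
def Impl (Proc Var Val Op Ret : Type) : Type 1 :=
  (o : Op) → (p : Proc) → OpImpl Proc Var Val Op Ret p

/-- Per-process states of the system induced by an implementation: `none` is idle. -/
def SIPState (I : Impl Proc Var Val Op Ret) (p : Proc) : Type :=
  Option ((o : Op) × (I o p).State)

/-- Per-process transitions of the system induced by an implementation. -/
inductive SIPStep (I : Impl Proc Var Val Op Ret) (p : Proc) :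
    SIPState I p → Ev Proc Var Val Op Ret → SIPState I p → Prop where
  | invoke (o : Op) :
      SIPStep I p none ⟨p, EvAct.inv o⟩ (some ⟨o, (I o p).init⟩)
  | memStep {o : Op} {q q' : (I o p).State} (a : MemAct Var Val) :
      (I o p).step q ⟨p, EvAct.mem a⟩ q' →
      SIPStep I p (some ⟨o, q⟩) ⟨p, EvAct.mem a⟩ (some ⟨o, q'⟩)
  | resStep {o : Op} {q q' : (I o p).State} (u : Ret) :
      (I o p).step q ⟨p, EvAct.res u⟩ q' →
      SIPStep I p (some ⟨o, q⟩) ⟨p, EvAct.res u⟩ none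

def SIState (I : Impl Proc Var Val Op Ret) : Type :=
  (p : Proc) → SIPState I p

/-- The system induced by an implementation interleaves the processes. -/
inductive SIStep [DecidableEq Proc] (I : Impl Proc Var Val Op Ret) :
    SIState I → Ev Proc Var Val Op Ret → SIState I → Prop where
  | mk (s : SIState I) (p : Proc) (e : Ev Proc Var Val Op Ret) (t : SIPState I p) :
      SIPStep I p (s p) e t → SIStep I s e (Function.update s p t)

def ImplTraces [DecidableEq Proc] (I : Impl Proc Var Val Op Ret) :
    Set (List (Ev Proc Var Val Op Ret)) :=
  {π | ∃ s : SIState I, LTSPath (SIStep I) (fun _ => none) π s}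

/-- Histories generated by `I` after `π0` under memory model `M`. -/
def GenHist [DecidableEq Proc] (π0 : List (Ev Proc Var Val Op Ret))
    (I : Impl Proc Var Val Op Ret) (M : MemModel Proc Var Val) :
    Set (List (ObjEv Proc Op Ret)) :=
  {h | ∃ π : List (Ev Proc Var Val Op Ret),
      π0 ++ π ∈ ImplTraces I ∧ restrictObj π = h ∧
      restrictMem (π0 ++ π) ∈ M.OTraces M.init}

/-- Consistency: every complete generated history linearizes into the specification. -/
def Consistent [DecidableEq Proc] (I : Impl Proc Var Val Op Ret)
    (M : MemModel Proc Var Val) (Spec : Set (List (ObjEv Proc Op Ret))) : Prop :=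
  ∀ h ∈ GenHist [] I M, CompleteH h → LinInto Spec h

/-- Availability after `h0` w.r.t. `h`. -/
def AvailableAfter [DecidableEq Proc] [DecidableEq Var] [Zero Val]
    (I : Impl Proc Var Val Op Ret) (h0 h : List (ObjEv Proc Op Ret)) : Prop :=
  ∀ π0 ∈ ImplTraces I,
    restrictMem π0 ∈ (SCMModel Proc Var Val).OTraces (SCMModel Proc Var Val).init →
    restrictObj π0 = h0 →
    h ∈ GenHist π0 I (SCMModel Proc Var Val)

def SpecAvailable [DecidableEq Proc] [DecidableEq Var] [Zero Val]
    (I : Impl Proc Var Val Op Ret) (Spec : Set (List (ObjEv Proc Op Ret))) : Prop :=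
  ∀ h0 h : List (ObjEv Proc Op Ret), CompleteSeq h0 → CompleteSeq h →
    h0 ++ h ∈ Spec → AvailableAfter I h0 h

end Impl

/-! ### Fence insertion -/

section Fence

variable {Proc Var Val Op Ret : Type}

/-- `FenceInsertion π π'` : `π'` is obtained from `π` by inserting fence events. -/
inductive FenceInsertion : List (Ev Proc Var Val Op Ret) → List (Ev Proc Var Val Op Ret) → Prop where
  | nil : FenceInsertion [] []
  | keep (e : Ev Proc Var Val Op Ret) {π π' : List (Ev Proc Var Val Op Ret)} :
      FenceInsertion π π' → FenceInsertion (e :: π) (e :: π')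
  | fence (p : Proc) {π π' : List (Ev Proc Var Val Op Ret)} :
      FenceInsertion π π' → FenceInsertion π (⟨p, EvAct.mem MemAct.fence⟩ :: π')

/-- Every write is separated from every later read or response by a fence. -/
def FencedWrites (π : List (Ev Proc Var Val Op Ret)) : Prop :=
  ∀ (i j : ℕ) (ei ej : Ev Proc Var Val Op Ret),
    i < j → π[i]? = some ei → π[j]? = some ej →
    Ev.isWriteEv ei → (Ev.isReadEv ej ∨ Ev.isResEv ej) →
    ∃ (k : ℕ) (ek : Ev Proc Var Val Op Ret),
      i < k ∧ k < j ∧ π[k]? = some ek ∧ Ev.isFenceEv ek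

/-- Histories generated by `I` under `M` (from the initial state). -/
def GeneratedHistories [DecidableEq Proc] (I : Impl Proc Var Val Op Ret)
    (M : MemModel Proc Var Val) : Set (List (ObjEv Proc Op Ret)) :=
  {h | ∃ π ∈ ImplTraces I, restrictObj π = h ∧ restrictMem π ∈ M.OTraces M.init}

end Fence

/-! ### The snapshot object -/

inductive SnapOp (W : Type) : Type where
  | update (w : W)
  | scan

inductive SnapRet (Proc W : Type) : Type where
  | ack
  | vec (v : Proc → Option W)

section Snapshot

variable {Proc W : Type}

/-- The sequential specification of the single-writer snapshot object, threaded
through the current contents `s`. -/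
inductive SnapSpecFrom [DecidableEq Proc] :
    (Proc → Option W) → List (ObjEv Proc (SnapOp W) (SnapRet Proc W)) → Prop where
  | nil (s : Proc → Option W) : SnapSpecFrom s []
  | update (s : Proc → Option W) (p : Proc) (w : W)
      {h : List (ObjEv Proc (SnapOp W) (SnapRet Proc W))} :
      SnapSpecFrom (Function.update s p (some w)) h →
      SnapSpecFrom s (⟨p, ObjAct.inv (SnapOp.update w)⟩ :: ⟨p, ObjAct.res SnapRet.ack⟩ :: h)
  | scan (s : Proc → Option W) (p : Proc)
      {h : List (ObjEv Proc (SnapOp W) (SnapRet Proc W))} :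
      SnapSpecFrom s h →
      SnapSpecFrom s (⟨p, ObjAct.inv SnapOp.scan⟩ :: ⟨p, ObjAct.res (SnapRet.vec s)⟩ :: h)

def SnapSpec (Proc W : Type) [DecidableEq Proc] :
    Set (List (ObjEv Proc (SnapOp W) (SnapRet Proc W))) :=
  {h | SnapSpecFrom (fun _ => none) h}

end Snapshot

/-!
Part (a): availability after `h0` yields an SCM-valid extension `πa` of `π0` generating the
sequential history `hseq`. Because `h1 ⊑ hseq` and every process runs `inv (mem)* res`, the
events of `πa` can be rescheduled, keeping each process's projection and the whole memory trace,
until the object events come in the order of `h1`: at each step either the next event of `h1` or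
the first memory event can be moved to the front.

Part (b): a merge in `M` of the two memory traces lifts to an interleaving `c` of `π1'` and
`π2'`. Their processes are disjoint, so `π0 ++ c` is a trace of the implementation; since `M` is
well-behaved, both memory traces are observable from one stable state reached by `σ0`, so the
memory trace of `π0 ++ c` is one of `M`. Consistency then linearizes `h0 ++ h` for the
interleaving `h` of `h1` and `h2` generated by `c`, against non-mergeability in `spec(O)`.
For strong mergeability, the offending interleaving `h` is lifted to `c` instead.
-/

section Lists

universe w w'

variable {α : Type w} {β : Type w'}

theorem _root_.Equiv.exists_succAbove_eq {n : ℕ} (F : Fin (n + 1) ≃ Fin (n + 1)) :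
    ∃ G : Fin n ≃ Fin n, ∀ i, (F 0).succAbove (G i) = F i.succ := by
  let F' : {x // x ≠ (0 : Fin (n + 1))} ≃ {y // y ≠ F 0} :=
    F.subtypeEquiv fun _ => F.injective.ne_iff.symm
  refine ⟨(finSuccAboveEquiv 0).trans (F'.trans (finSuccAboveEquiv (F 0)).symm), fun i => ?_⟩
  have h := (finSuccAboveEquiv (F 0)).apply_symm_apply (F' (finSuccAboveEquiv 0 i))
  rw [finSuccAboveEquiv_apply, Subtype.ext_iff] at h
  simpa [F', finSuccAboveEquiv_apply] using h

theorem getElem_eraseIdx_succAbove {l : List α} {n : ℕ} (hl : l.length = n + 1)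
    (j : Fin (n + 1)) (k : Fin n) :
    (l.eraseIdx j)[(k : ℕ)]'(by rw [List.length_eraseIdx, hl, if_pos j.isLt]; exact k.isLt) =
      l[(j.succAbove k : ℕ)] := by
  rw [List.getElem_eraseIdx]
  by_cases hk : (k : ℕ) < j
  · simp [hk, Fin.succAbove_of_castSucc_lt _ _ hk]
  · simp [hk, Fin.succAbove_of_le_castSucc _ _ (not_lt.mp hk)]

namespace Shuffle

variable {s1 s2 s : List α}

theorem append_left (h : Shuffle s1 s2 s) (t : List α) : Shuffle (s1 ++ t) s2 (s ++ t) := by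
  induction t using List.reverseRecOn with
  | nil => simpa using h
  | append_singleton t x ih => simpa using ih.left x

theorem append_right (h : Shuffle s1 s2 s) (t : List α) : Shuffle s1 (s2 ++ t) (s ++ t) := by
  induction t using List.reverseRecOn with
  | nil => simpa using h
  | append_singleton t x ih => simpa using ih.right x

theorem append (s1 s2 : List α) : Shuffle s1 s2 (s1 ++ s2) := by
  simpa using (Shuffle.nil.append_left s1).append_right s2

theorem symm (h : Shuffle s1 s2 s) : Shuffle s2 s1 s := by
  induction h with
  | nil => exact nil
  | left x _ ih => exact ih.right x
  | right x _ ih => exact ih.left x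

theorem eq_of_right_eq_nil (h : Shuffle s1 [] s) : s = s1 := by
  generalize hz : ([] : List α) = z at h
  induction h with
  | nil => rfl
  | left x _ ih => rw [ih hz]
  | right x _ _ => simp at hz

theorem filterMap (f : α → Option β) (h : Shuffle s1 s2 s) :
    Shuffle (s1.filterMap f) (s2.filterMap f) (s.filterMap f) := by
  induction h with
  | nil => exact nil
  | left x _ ih =>
    cases hx : f x
    · simpa [hx] using ih
    · simpa [hx] using ih.left _
  | right x _ ih =>
    cases hx : f x
    · simpa [hx] using ih
    · simpa [hx] using ih.right _

theorem filter (p : α → Bool) (h : Shuffle s1 s2 s) :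
    Shuffle (s1.filter p) (s2.filter p) (s.filter p) := by
  simpa only [← List.filterMap_eq_filter] using h.filterMap (Option.guard fun x => p x)

theorem filter_eq_left (p : α → Bool) (h : Shuffle s1 s2 s) (h2 : s2.filter p = []) :
    s.filter p = s1.filter p :=
  (h2 ▸ h.filter p).eq_of_right_eq_nil

theorem exists_filterMap_eq (f : α → Option β) {x y z : List β} (h : Shuffle x y z) :
    ∀ {a b : List α}, a.filterMap f = x → b.filterMap f = y →
      ∃ c, Shuffle a b c ∧ c.filterMap f = z := by
  induction h with
  | nil =>
    intro a b ha hb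
    exact ⟨a ++ b, append a b, by simp [ha, hb]⟩
  | left e _ ih =>
    intro a b ha hb
    obtain ⟨a1, a2, rfl, ha1, ha2⟩ := List.filterMap_eq_append_iff.mp ha
    obtain ⟨c, hc, hcf⟩ := ih ha1 hb
    exact ⟨c ++ a2, hc.append_left a2, by simp [hcf, ha2]⟩
  | right e _ ih =>
    intro a b ha hb
    obtain ⟨b1, b2, rfl, hb1, hb2⟩ := List.filterMap_eq_append_iff.mp hb
    obtain ⟨c, hc, hcf⟩ := ih ha hb1
    exact ⟨c ++ b2, hc.append_right b2, by simp [hcf, hb2]⟩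

end Shuffle

namespace LTSPath

variable {S : Type w} {L : Type w'} {step : S → L → S → Prop}

theorem append {s s' s'' : S} {xs ys : List L} (h1 : LTSPath step s xs s')
    (h2 : LTSPath step s' ys s'') : LTSPath step s (xs ++ ys) s'' := by
  induction h1 with
  | nil => exact h2
  | cons hstep _ ih => exact cons hstep (ih h2)

theorem exists_of_append {s s'' : S} {xs ys : List L} (h : LTSPath step s (xs ++ ys) s'') :
    ∃ s', LTSPath step s xs s' ∧ LTSPath step s' ys s'' := by
  induction xs generalizing s with
  | nil => exact ⟨s, nil s, h⟩
  | cons x xs ih =>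
    obtain _ | ⟨hstep, hpath⟩ := h
    obtain ⟨s', h1, h2⟩ := ih hpath
    exact ⟨s', cons hstep h1, h2⟩

theorem map {S' : Type w} {step' : S' → L → S' → Prop} (f : S → S')
    (hf : ∀ s l t, step s l t → step' (f s) l (f t)) {s t : S} {ls : List L}
    (h : LTSPath step s ls t) : LTSPath step' (f s) ls (f t) := by
  induction h with
  | nil => exact nil _
  | cons hstep _ ih => exact cons (hf _ _ _ hstep) ih

end LTSPath

end Lists

namespace Reorder

universe w

variable {α : Type w} {R : α → α → Prop}

theorem eq_nil_of_nil {s' : List α} (h : Reorder R [] s') : s' = [] := by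
  obtain ⟨f, -, -⟩ := h
  exact List.length_eq_zero_iff.mp (Fin.equiv_iff_eq.mp ⟨f⟩).symm

theorem exists_cons_split {a : α} {s s' : List α} (h : Reorder R (a :: s) s') :
    ∃ s1 s2, s' = s1 ++ a :: s2 ∧ (∀ y ∈ s1, ¬ R a y) ∧ Reorder R s (s1 ++ s2) := by
  obtain ⟨f, hget, hmono⟩ := h
  have hlen : s'.length = s.length + 1 := (Fin.equiv_iff_eq.mp ⟨f⟩).symm
  set F := f.trans (finCongr hlen)
  have hF : ∀ i, s'[(F i : ℕ)] = (a :: s)[(i : ℕ)] := fun i => hget i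
  have hFlt : ∀ i k : Fin (s.length + 1), i < k →
      R (a :: s)[(i : ℕ)] (a :: s)[(k : ℕ)] → F i < F k :=
    fun i k hik hR => hmono i k hik hR
  obtain ⟨G, hG⟩ := F.exists_succAbove_eq
  have hF0 := (F 0).isLt
  have hsplit : s' = s'.take (F 0) ++ a :: s'.drop (F 0 + 1) := by
    have ha : s'[(F 0 : ℕ)] = a := hF 0
    conv_lhs => rw [← List.take_append_drop (F 0) s', List.drop_eq_getElem_cons (by omega), ha]
  have hlen' : (s'.eraseIdx (F 0)).length = s.length := by
    simp [List.length_eraseIdx, hlen]; omega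
  refine ⟨_, _, hsplit, fun y hy hR => ?_, ?_⟩
  · obtain ⟨i, hi, rfl⟩ := List.getElem_of_mem hy
    rw [List.getElem_take] at hR
    have hij : i < (F 0 : ℕ) := by simp at hi; omega
    obtain ⟨k, hk⟩ := F.surjective ⟨i, by omega⟩
    have hk0 : k ≠ 0 := by
      rintro rfl
      simp only [Fin.ext_iff] at hk
      omega
    have hlt := hFlt 0 k (Fin.pos_of_ne_zero hk0) (by
      rw [← hF k]
      simpa [hk] using hR)
    simp only [hk, Fin.lt_def] at hlt
    omega
  · rw [← List.eraseIdx_eq_take_drop_succ]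
    refine ⟨G.trans (finCongr hlen'.symm), fun i => ?_, fun i k hik hR => ?_⟩
    · simp only [List.get_eq_getElem, Equiv.trans_apply, finCongr_apply, Fin.val_cast,
        getElem_eraseIdx_succAbove hlen, hG]
      exact hF i.succ
    · have := hFlt i.succ k.succ (Fin.succ_lt_succ_iff.mpr hik)
        (by simpa only [Fin.val_succ, List.getElem_cons_succ, List.get_eq_getElem] using hR)
      rw [← hG, ← hG, Fin.succAbove_lt_succAbove_iff] at this
      exact this

theorem filter_eq {s s' : List α} (h : Reorder R s s') (p : α → Bool)
    (hR : ∀ a b, p a → p b → R a b) : s'.filter p = s.filter p := by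
  induction s generalizing s' with
  | nil => rw [h.eq_nil_of_nil]
  | cons a s ih =>
    obtain ⟨s1, s2, rfl, hs1, h'⟩ := h.exists_cons_split
    have ih := ih h'
    rw [List.filter_append] at ih
    by_cases ha : p a
    · have hs1p : s1.filter p = [] :=
        List.filter_eq_nil_iff.mpr fun y hy hpy => hs1 y hy (hR a y ha hpy)
      simp [List.filter_append, hs1p, ha, ← ih]
    · simp [List.filter_append, ha, ← ih]

end Reorder

local notation:70 l:70 " ↾ " p:max => List.filter (fun e => decide (Ev.proc e = p)) l
local notation:70 l:70 " ↾ " p:max => List.filter (fun e => decide (ObjEv.proc e = p)) l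

section Events

variable {Proc Var Val Op Ret : Type}

def Ev.isInvEv (e : Ev Proc Var Val Op Ret) : Prop := ∃ o, e.act = EvAct.inv o

theorem restrictObj_append (l1 l2 : List (Ev Proc Var Val Op Ret)) :
    restrictObj (l1 ++ l2) = restrictObj l1 ++ restrictObj l2 :=
  List.filterMap_append

theorem restrictMem_append (l1 l2 : List (Ev Proc Var Val Op Ret)) :
    restrictMem (l1 ++ l2) = restrictMem l1 ++ restrictMem l2 :=
  List.filterMap_append

theorem restrictObj_cons (x : Ev Proc Var Val Op Ret) (l : List (Ev Proc Var Val Op Ret)) :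
    restrictObj (x :: l) = x.toObj.toList ++ restrictObj l := by
  cases h : x.toObj <;> simp [restrictObj, h]

theorem restrictMem_cons (x : Ev Proc Var Val Op Ret) (l : List (Ev Proc Var Val Op Ret)) :
    restrictMem (x :: l) = x.toMem.toList ++ restrictMem l := by
  cases h : x.toMem <;> simp [restrictMem, h]

theorem Ev.proc_of_toObj_eq_some {e : Ev Proc Var Val Op Ret} {o : ObjEv Proc Op Ret}
    (h : e.toObj = some o) : o.proc = e.proc := by
  obtain ⟨p, a | o' | u⟩ := e <;> simp [Ev.toObj] at h <;> rw [← h]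

theorem restrictObj_filter [DecidableEq Proc] (π : List (Ev Proc Var Val Op Ret)) (p : Proc) :
    restrictObj (π ↾ p) = restrictObj π ↾ p := by
  induction π with
  | nil => rfl
  | cons e π ih =>
    cases he : e.toObj with
    | none => by_cases hp : e.proc = p <;> simp_all [restrictObj]
    | some o =>
      have := Ev.proc_of_toObj_eq_some he
      by_cases hp : e.proc = p <;> simp_all [restrictObj]

theorem filter_eq_nil_iff_notMem_procsEv [DecidableEq Proc]
    (π : List (Ev Proc Var Val Op Ret)) (p : Proc) : π ↾ p = [] ↔ p ∉ procsEv π := by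
  simp [List.filter_eq_nil_iff, procsEv]

theorem filter_eq_nil_iff_notMem_procsObj [DecidableEq Proc]
    (h : List (ObjEv Proc Op Ret)) (p : Proc) : h ↾ p = [] ↔ p ∉ procsObj h := by
  simp [List.filter_eq_nil_iff, procsObj]

end Events

section Histories

variable {Proc Op Ret : Type}

theorem CompleteSeq.append {h h' : List (ObjEv Proc Op Ret)} (hh : CompleteSeq h)
    (hh' : CompleteSeq h') : CompleteSeq (h ++ h') := by
  induction hh with
  | nil => exact hh'
  | cons p o u _ ih => exact .cons p o u ih

theorem CompleteSeq.eq_nil_or_getLast_isRes {h : List (ObjEv Proc Op Ret)} (hh : CompleteSeq h) :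
    h = [] ∨ ∃ e, h.getLast? = some e ∧ e.act.isRes := by
  induction hh with
  | nil => exact .inl rfl
  | cons p o u h ih =>
    refine .inr ?_
    rcases ih with rfl | ⟨e, he, hres⟩
    · exact ⟨⟨p, ObjAct.res u⟩, rfl, trivial⟩
    · exact ⟨e, by simp [List.getLast?_cons, he], hres⟩

variable [DecidableEq Proc]

theorem CompleteSeq.filter {h : List (ObjEv Proc Op Ret)} (hh : CompleteSeq h) (p : Proc) :
    CompleteSeq (h ↾ p) := by
  induction hh with
  | nil => exact .nil
  | cons q o u _ ih => by_cases hq : q = p <;> simp [hq, ih, CompleteSeq.cons]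

theorem CompleteH.of_forall_filter {h : List (ObjEv Proc Op Ret)}
    (hh : ∀ p, ∃ h', CompleteH h' ∧ h ↾ p = h' ↾ p) : CompleteH h := by
  refine ⟨fun p => ?_, fun p => ?_⟩ <;> obtain ⟨h', hc, hp⟩ := hh p <;> rw [hp]
  exacts [hc.1 p, hc.2 p]

theorem CompleteH.shuffle {h1 h2 h : List (ObjEv Proc Op Ret)} (hc1 : CompleteH h1)
    (hc2 : CompleteH h2) (hdisj : ∀ p, h1 ↾ p = [] ∨ h2 ↾ p = []) (hsh : Shuffle h1 h2 h) :
    CompleteH h :=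
  .of_forall_filter fun p => (hdisj p).elim
    (fun h1p => ⟨h2, hc2, hsh.symm.filter_eq_left _ h1p⟩)
    (fun h2p => ⟨h1, hc1, hsh.filter_eq_left _ h2p⟩)

theorem CompleteH.completeSeq_append {h0 h : List (ObjEv Proc Op Ret)} (hh0 : CompleteSeq h0)
    (hh : CompleteH h) : CompleteH (h0 ++ h) := by
  refine ⟨fun p => ?_, fun p => ?_⟩ <;> rw [List.filter_append]
  · obtain ⟨c, hc, t, rfl⟩ := hh.1 p
    exact ⟨h0 ↾ p ++ (h ↾ p ++ t), (hh0.filter p).append hc, t, by simp⟩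
  · rcases hh.2 p with hnil | ⟨e, he, hres⟩
    · rw [hnil, List.append_nil]
      exact (hh0.filter p).eq_nil_or_getLast_isRes
    · exact .inr ⟨e, by simp [List.getLast?_append, he], hres⟩

end Histories

section Traces

variable {Proc Var Val Op Ret : Type} {I : Impl Proc Var Val Op Ret}

theorem SIPStep.proc_eq {p : Proc} {s t : SIPState I p} {e : Ev Proc Var Val Op Ret}
    (h : SIPStep I p s e t) : e.proc = p := by
  cases h <;> rfl

variable [DecidableEq Proc]

theorem SIState.update_self (s : SIState I) (p : Proc) (t : SIPState I p) :
    Function.update s p t p = t :=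
  Function.update_self (β := fun p => SIPState I p) ..

theorem SIState.update_of_ne (s : SIState I) {p q : Proc} (h : q ≠ p) (t : SIPState I p) :
    Function.update s p t q = s q :=
  Function.update_of_ne (β := fun p => SIPState I p) h ..

theorem LTSPath.sIPStep_filter {s s' : SIState I} {π : List (Ev Proc Var Val Op Ret)}
    (h : LTSPath (SIStep I) s π s') (p : Proc) : LTSPath (SIPStep I p) (s p) (π ↾ p) (s' p) := by
  induction h with
  | nil => exact .nil _
  | cons hstep _ ih =>
    cases hstep with | mk q e t hq =>
    by_cases hqp : q = p
    · subst hqp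
      rw [List.filter_cons_of_pos (by simpa using hq.proc_eq)]
      rw [SIState.update_self] at ih
      exact .cons hq ih
    · rw [List.filter_cons_of_neg (by simpa [hq.proc_eq] using hqp)]
      rwa [SIState.update_of_ne _ (Ne.symm hqp)] at ih

theorem exists_sIStep_path {π : List (Ev Proc Var Val Op Ret)} {s : SIState I}
    (h : ∀ p, ∃ t, LTSPath (SIPStep I p) (s p) (π ↾ p) t) : ∃ s', LTSPath (SIStep I) s π s' := by
  induction π generalizing s with
  | nil => exact ⟨s, .nil s⟩
  | cons e π ih =>
    obtain ⟨_, hpath⟩ := h e.proc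
    rw [List.filter_cons_of_pos (by simp)] at hpath
    obtain _ | ⟨hstep, hrest⟩ := hpath
    obtain ⟨s', hs'⟩ := ih (s := Function.update s e.proc _) fun p => by
      by_cases hp : p = e.proc
      · subst hp
        exact ⟨_, by rwa [SIState.update_self]⟩
      · obtain ⟨t, ht⟩ := h p
        rw [List.filter_cons_of_neg (by simpa using Ne.symm hp)] at ht
        exact ⟨t, by rwa [SIState.update_of_ne _ hp]⟩
    exact ⟨s', .cons (.mk s e.proc e _ hstep) hs'⟩

theorem mem_implTraces_iff {π : List (Ev Proc Var Val Op Ret)} :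
    π ∈ ImplTraces I ↔ ∀ p, ∃ t, LTSPath (SIPStep I p) none (π ↾ p) t :=
  ⟨fun ⟨s, hs⟩ p => ⟨s p, hs.sIPStep_filter p⟩, exists_sIStep_path⟩

theorem mem_implTraces_of_forall_filter {π' : List (Ev Proc Var Val Op Ret)}
    (h : ∀ p, ∃ π ∈ ImplTraces I, π' ↾ p = π ↾ p) : π' ∈ ImplTraces I := by
  refine mem_implTraces_iff.mpr fun p => ?_
  obtain ⟨π, hπ, hp⟩ := h p
  rw [hp]
  exact mem_implTraces_iff.mp hπ p

theorem Reorder.filter_eq_of_sprocEv {π π' : List (Ev Proc Var Val Op Ret)}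
    (h : Reorder sprocEv π π') (p : Proc) : π' ↾ p = π ↾ p :=
  h.filter_eq _ fun _ _ ha hb => by simp_all [sprocEv]

theorem mem_implTraces_append_of_reorder {π0 π π' : List (Ev Proc Var Val Op Ret)}
    (ht : π0 ++ π ∈ ImplTraces I) (h : Reorder sprocEv π π') : π0 ++ π' ∈ ImplTraces I :=
  mem_implTraces_of_forall_filter fun p =>
    ⟨_, ht, by rw [List.filter_append, List.filter_append, h.filter_eq_of_sprocEv]⟩

theorem mem_implTraces_append_of_shuffle {π0 π1 π2 c : List (Ev Proc Var Val Op Ret)}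
    (ht1 : π0 ++ π1 ∈ ImplTraces I) (ht2 : π0 ++ π2 ∈ ImplTraces I)
    (hdisj : ∀ p, π1 ↾ p = [] ∨ π2 ↾ p = []) (hc : Shuffle π1 π2 c) : π0 ++ c ∈ ImplTraces I :=
  mem_implTraces_of_forall_filter fun p => by
    rcases hdisj p with h | h
    · exact ⟨π0 ++ π2, ht2, by rw [List.filter_append, List.filter_append,
        hc.symm.filter_eq_left _ h]⟩
    · exact ⟨π0 ++ π1, ht1, by rw [List.filter_append, List.filter_append,
        hc.filter_eq_left _ h]⟩

end Traces

section Runs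

variable {Proc Var Val Op Ret : Type} {p : Proc}

/-- `SIPStep I p` with the state of the running operation forgotten: the flag records whether
the process is idle. -/
inductive ProcStep (p : Proc) : Bool → Ev Proc Var Val Op Ret → Bool → Prop where
  | inv (o : Op) : ProcStep p true ⟨p, EvAct.inv o⟩ false
  | mem (a : MemAct Var Val) : ProcStep p false ⟨p, EvAct.mem a⟩ false
  | res (u : Ret) : ProcStep p false ⟨p, EvAct.res u⟩ true

theorem SIPStep.procStep {I : Impl Proc Var Val Op Ret} {s t : SIPState I p}
    {e : Ev Proc Var Val Op Ret} (h : SIPStep I p s e t) : ProcStep p s.isNone e t.isNone := by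
  cases h
  exacts [.inv _, .mem _, .res _]

def IsProcRun (p : Proc) (l : List (Ev Proc Var Val Op Ret)) : Prop :=
  ∃ b b', LTSPath (ProcStep p) b l b'

theorem IsProcRun.of_cons {x : Ev Proc Var Val Op Ret} {l : List (Ev Proc Var Val Op Ret)}
    (h : IsProcRun p (x :: l)) : IsProcRun p l := by
  obtain ⟨b, b', _ | ⟨-, hl⟩⟩ := h
  exact ⟨_, b', hl⟩

theorem IsProcRun.isResEv_iff_isInvEv {l1 l2 : List (Ev Proc Var Val Op Ret)}
    {x y : Ev Proc Var Val Op Ret} (h : IsProcRun p (l1 ++ x :: y :: l2)) :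
    x.isResEv ↔ y.isInvEv := by
  obtain ⟨b, b', h⟩ := h
  obtain ⟨_, -, _ | ⟨hx, _ | ⟨hy, -⟩⟩⟩ := LTSPath.exists_of_append h
  cases hx <;> cases hy <;> simp [Ev.isResEv, Ev.isInvEv]

theorem LTSPath.procStep_idle_of_completeSeq {l : List (Ev Proc Var Val Op Ret)} {b' : Bool}
    (h : LTSPath (ProcStep p) true l b') (hl : CompleteSeq (restrictObj l)) : b' = true := by
  suffices H : ∀ {b l}, LTSPath (ProcStep p) b l b' →
      (b = true → CompleteSeq (restrictObj l) → b' = true) ∧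
      (b = false → ∀ u h, restrictObj l = ⟨p, ObjAct.res u⟩ :: h → CompleteSeq h → b' = true) from
    (H h).1 rfl hl
  clear h hl
  intro b l h
  induction h with
  | nil => exact ⟨fun h _ => h, fun _ _ _ h => nomatch h⟩
  | @cons _ _ _ _ ls hstep _ ih =>
    cases hstep with
    | inv o =>
      refine ⟨fun _ hcs => ?_, nofun⟩
      change CompleteSeq (⟨p, ObjAct.inv o⟩ :: restrictObj ls) at hcs
      generalize restrictObj ls = L at hcs ih
      cases hcs with | cons _ _ u hcs => exact ih.2 rfl u _ rfl hcs
    | mem a => exact ⟨nofun, fun _ => ih.2 rfl⟩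
    | res u =>
      refine ⟨nofun, fun _ u' h hl hcs => ih.1 rfl ?_⟩
      change ⟨p, ObjAct.res u⟩ :: restrictObj ls = _ at hl
      rwa [(List.cons.inj hl).2]

theorem LTSPath.restrictObj_ne_nil_of_idle {l : List (Ev Proc Var Val Op Ret)} {b' : Bool}
    (h : LTSPath (ProcStep p) true l b') (hl : l ≠ []) : restrictObj l ≠ [] := by
  obtain _ | ⟨hstep, -⟩ := h
  · exact absurd rfl hl
  · cases hstep
    simp [restrictObj, Ev.toObj]

end Runs

section Reschedule

variable {Proc Var Val Op Ret : Type}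

theorem exists_split_of_reorder_cons {π : List (Ev Proc Var Val Op Ret)}
    {e : ObjEv Proc Op Ret} {g : List (ObjEv Proc Op Ret)}
    (h : Reorder linRel (e :: g) (restrictObj π)) :
    ∃ A ev B, π = A ++ ev :: B ∧ ev.toObj = some e ∧ (∀ y ∈ restrictObj A, ¬ linRel e y) ∧
      Reorder linRel g (restrictObj (A ++ B)) := by
  obtain ⟨O1, O2, hO, hO1, hg⟩ := h.exists_cons_split
  obtain ⟨A, B', rfl, hA, hB'⟩ := List.filterMap_eq_append_iff.mp hO
  obtain ⟨C, ev, B, rfl, hC, hev, hB⟩ := List.filterMap_eq_cons_iff.mp hB'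
  have hAC : restrictObj (A ++ C) = O1 := by
    simp [← hA, restrictObj, List.filterMap_eq_nil_iff.mpr hC]
  refine ⟨A ++ C, ev, B, by simp, hev, hAC ▸ hO1, ?_⟩
  rwa [restrictObj_append, hAC, restrictObj, hB]

variable [DecidableEq Proc]

theorem IsProcRun.exists_pred {A B : List (Ev Proc Var Val Op Ret)} {x : Ev Proc Var Val Op Ret}
    (hrun : IsProcRun x.proc ((A ++ x :: B) ↾ x.proc)) (hA : ∃ z ∈ A, z.proc = x.proc) :
    ∃ y ∈ A, y.proc = x.proc ∧ (y.isResEv ↔ x.isInvEv) := by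
  have hne : A ↾ x.proc ≠ [] := by simpa [List.filter_eq_nil_iff] using hA
  rw [List.filter_append, List.filter_cons_of_pos (by simp),
    ← List.dropLast_append_getLast hne, List.append_assoc, List.singleton_append] at hrun
  have hmem := List.mem_filter.mp (List.getLast_mem hne)
  exact ⟨_, hmem.1, by simpa using hmem.2, hrun.isResEv_iff_isInvEv⟩

theorem IsProcRun.isRes_of_exists_proc_eq {A B : List (Ev Proc Var Val Op Ret)}
    {ev : Ev Proc Var Val Op Ret} {e : ObjEv Proc Op Ret}
    (hrun : IsProcRun ev.proc ((A ++ ev :: B) ↾ ev.proc)) (hev : ev.toObj = some e)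
    (hA : ∀ y ∈ restrictObj A, ¬ linRel e y) (hq : ∃ z ∈ A, z.proc = ev.proc) :
    e.act.isRes ∧ ∃ z ∈ A, z.toObj = none := by
  obtain ⟨z, hz, hzq, hz_iff⟩ := hrun.exists_pred hq
  have hzObj : z.toObj = none := by
    cases hzo : z.toObj with
    | none => rfl
    | some o =>
      refine absurd (Or.inl ?_) (hA o (List.mem_filterMap.mpr ⟨z, hz, hzo⟩))
      rw [Ev.proc_of_toObj_eq_some hev, Ev.proc_of_toObj_eq_some hzo, hzq]
  refine ⟨?_, z, hz, hzObj⟩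
  -- `z` is a memory event, so the next event `ev` of its process is not an invocation.
  obtain ⟨_, _ | _ | _⟩ := z <;> obtain ⟨_, _ | _ | _⟩ := ev <;>
    simp [Ev.toObj, Ev.isResEv, Ev.isInvEv] at hzObj hz_iff hev
  simp [← hev, ObjAct.isRes]

theorem IsProcRun.forall_proc_ne_of_isRes {γ ρ : List (Ev Proc Var Val Op Ret)}
    {mv : Ev Proc Var Val Op Ret} {e : ObjEv Proc Op Ret}
    (hrun : IsProcRun mv.proc ((γ ++ mv :: ρ) ↾ mv.proc)) (hγ : ∀ x ∈ γ, x.toMem = none)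
    (hmv : mv.toObj = none) (hres : e.act.isRes) (hγe : ∀ y ∈ restrictObj γ, ¬ linRel e y) :
    ∀ z ∈ γ, z.proc ≠ mv.proc := by
  by_contra! hp
  obtain ⟨y, hy, -, hy_iff⟩ := hrun.exists_pred hp
  -- `y` is an object event followed in its process by the memory event `mv`: an invocation.
  obtain ⟨o, hyo, hinv⟩ : ∃ o, y.toObj = some o ∧ o.act.isInv := by
    have := hγ y hy
    obtain ⟨_, _ | _ | _⟩ := y <;> obtain ⟨_, _ | _ | _⟩ := mv <;>
      simp_all [Ev.toObj, Ev.toMem, Ev.isResEv, Ev.isInvEv, ObjAct.isInv]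
  exact hγe o (List.mem_filterMap.mpr ⟨y, hy, hyo⟩) (Or.inr ⟨hres, hinv⟩)

theorem exists_reschedule_step {π : List (Ev Proc Var Val Op Ret)}
    {e : ObjEv Proc Op Ret} {g : List (ObjEv Proc Op Ret)}
    (hrun : ∀ p, IsProcRun p (π ↾ p)) (h : Reorder linRel (e :: g) (restrictObj π)) :
    ∃ A x B g', π = A ++ x :: B ∧ (∀ z ∈ A, z.proc ≠ x.proc) ∧
      restrictMem (x :: (A ++ B)) = restrictMem π ∧
      x.toObj.toList ++ g' = e :: g ∧ Reorder linRel g' (restrictObj (A ++ B)) := by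
  obtain ⟨A, ev, B, rfl, hev, hA, hg⟩ := exists_split_of_reorder_cons h
  by_cases hq : ∃ z ∈ A, z.proc = ev.proc
  swap
  · push Not at hq
    have hevMem : ev.toMem = none := by
      obtain ⟨_, _ | _ | _⟩ := ev <;> simp_all [Ev.toObj, Ev.toMem]
    exact ⟨A, ev, B, g, rfl, hq, by simp [restrictMem, hevMem], by simp [hev], hg⟩
  -- Otherwise `e` is a response and `A` has a memory event; schedule the first one, `mv`.
  obtain ⟨hres, z, hz, hzObj⟩ := (hrun ev.proc).isRes_of_exists_proc_eq hev hA hq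
  obtain ⟨m, σ, hm⟩ : ∃ m σ, restrictMem A = m :: σ := by
    obtain ⟨zm, hzm⟩ : ∃ zm, z.toMem = some zm := by
      obtain ⟨_, _ | _ | _⟩ := z <;> simp_all [Ev.toObj, Ev.toMem]
    exact List.exists_cons_of_ne_nil (List.ne_nil_of_mem (List.mem_filterMap.mpr ⟨z, hz, hzm⟩))
  obtain ⟨γ, mv, A', rfl, hγ, hmv, -⟩ := List.filterMap_eq_cons_iff.mp hm
  have hmvObj : mv.toObj = none := by
    obtain ⟨_, _ | _ | _⟩ := mv <;> simp_all [Ev.toObj, Ev.toMem]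
  have hrunp := hrun mv.proc
  rw [List.append_assoc, List.cons_append] at hrunp
  refine ⟨γ, mv, A' ++ ev :: B, e :: g, by simp,
    hrunp.forall_proc_ne_of_isRes hγ hmvObj hres fun y hy => hA y ?_, ?_, by simp [hmvObj], ?_⟩
  · rw [restrictObj_append]
    exact List.mem_append_left _ hy
  · simp [restrictMem, List.filterMap_eq_nil_iff.mpr hγ, hmv]
  · have : restrictObj (γ ++ mv :: A' ++ ev :: B) = restrictObj (γ ++ (A' ++ ev :: B)) := by
      simp [restrictObj, hmvObj]
    rwa [this] at h

theorem exists_reschedule (π : List (Ev Proc Var Val Op Ret)) (g : List (ObjEv Proc Op Ret))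
    (hrun : ∀ p, IsProcRun p (π ↾ p)) (h : Reorder linRel g (restrictObj π)) :
    ∃ π' : List (Ev Proc Var Val Op Ret),
      (∀ p, π' ↾ p = π ↾ p) ∧ restrictMem π' = restrictMem π ∧ restrictObj π' = g := by
  match g with
  | [] => exact ⟨π, fun _ => rfl, rfl, h.eq_nil_of_nil⟩
  | e :: g =>
    obtain ⟨A, x, B, g', rfl, hA, hmem, hxg, hg'⟩ := exists_reschedule_step hrun h
    have hfilter : ∀ p, (x :: (A ++ B)) ↾ p = (A ++ x :: B) ↾ p := fun p => by
      by_cases hp : x.proc = p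
      · subst hp
        have : A ↾ x.proc = [] := by simpa [List.filter_eq_nil_iff] using hA
        simp [List.filter_append, this]
      · simp [List.filter_append, hp]
    have hrun' : ∀ p, IsProcRun p ((A ++ B) ↾ p) := fun p => by
      have := hrun p
      rw [← hfilter p, List.filter_cons] at this
      split_ifs at this
      exacts [this.of_cons, this]
    obtain ⟨ρ, hρf, hρm, hρo⟩ := exists_reschedule (A ++ B) g' hrun' hg'
    refine ⟨x :: ρ, fun p => ?_, ?_, ?_⟩
    · rw [← hfilter, List.filter_cons, List.filter_cons, hρf]
    · rw [← hmem, restrictMem_cons, restrictMem_cons, hρm]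
    · rw [restrictObj_cons, hρo, hxg]
termination_by π.length
decreasing_by simp_all

end Reschedule

section Memory

variable {Proc Var Val : Type}

def MemModel.Reaches (M : MemModel Proc Var Val) (q : M.State) (σ : List (MemEv Proc Var Val))
    (q' : M.State) : Prop :=
  ∃ π, LTSPath M.step q π q' ∧ π.reduceOption = σ

namespace MemModel.Reaches

variable {M : MemModel Proc Var Val} {q q' q'' : M.State} {σ σ' : List (MemEv Proc Var Val)}

theorem mem_oTraces (h : M.Reaches q σ q') : σ ∈ M.OTraces q :=
  let ⟨π, hπ, hσ⟩ := h
  ⟨π, q', hπ, hσ⟩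

theorem append (h : M.Reaches q σ q') (h' : M.Reaches q' σ' q'') : M.Reaches q (σ ++ σ') q'' :=
  let ⟨π, hπ, hσ⟩ := h
  let ⟨π', hπ', hσ'⟩ := h'
  ⟨π ++ π', hπ.append hπ', by rw [List.reduceOption_append, hσ, hσ']⟩

theorem exists_of_append (h : M.Reaches q (σ ++ σ') q'') :
    ∃ q', M.Reaches q σ q' ∧ M.Reaches q' σ' q'' := by
  obtain ⟨π, hπ, hσ⟩ := h
  obtain ⟨π1, π2, rfl, h1, h2⟩ := List.filterMap_eq_append_iff.mp hσ
  obtain ⟨q', hπ1, hπ2⟩ := hπ.exists_of_append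
  exact ⟨q', ⟨π1, hπ1, h1⟩, ⟨π2, hπ2, h2⟩⟩

theorem of_step {l : Option (MemEv Proc Var Val)} (h : M.step q l q') : M.Reaches q l.toList q' :=
  ⟨[l], .cons h (.nil _), by cases l <;> rfl⟩

theorem of_tauReach (h : TauReach M q q') : M.Reaches q [] q' := by
  induction h with
  | refl => exact ⟨[], .nil _, rfl⟩
  | tail _ hstep ih => simpa using ih.append (of_step hstep)

end MemModel.Reaches

theorem MemModel.mem_oTraces_iff {M : MemModel Proc Var Val} {q : M.State}
    {σ : List (MemEv Proc Var Val)} : σ ∈ M.OTraces q ↔ ∃ q', M.Reaches q σ q' :=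
  ⟨fun ⟨π, q', hπ, hσ⟩ => ⟨q', π, hπ, hσ⟩, fun ⟨_, h⟩ => h.mem_oTraces⟩

variable [DecidableEq Var]

theorem SCMStep.right_unique {m m1 m2 : Var → Val} {l : Option (MemEv Proc Var Val)}
    (h1 : SCMStep Proc Var Val m l m1) (h2 : SCMStep Proc Var Val m l m2) : m1 = m2 := by
  cases h1 <;> cases h2 <;> rfl

theorem SCMStep.exists_eq_some {m m' : Var → Val} {l : Option (MemEv Proc Var Val)}
    (h : SCMStep Proc Var Val m l m') : ∃ e, l = some e := by
  cases h <;> exact ⟨_, rfl⟩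

variable [Zero Val]

theorem SCMModel.reaches_unique {m m1 m2 : Var → Val} {σ : List (MemEv Proc Var Val)}
    (h1 : (SCMModel Proc Var Val).Reaches m σ m1) (h2 : (SCMModel Proc Var Val).Reaches m σ m2) :
    m1 = m2 := by
  obtain ⟨π1, hπ1, rfl⟩ := h1
  obtain ⟨π2, hπ2, hσ⟩ := h2
  change LTSPath (SCMStep Proc Var Val) m π1 m1 at hπ1
  change LTSPath (SCMStep Proc Var Val) m π2 m2 at hπ2
  induction hπ1 generalizing π2 with
  | nil =>
    obtain _ | ⟨hs, -⟩ := hπ2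
    · rfl
    · obtain ⟨e, rfl⟩ := hs.exists_eq_some
      simp at hσ
  | cons hs1 _ ih =>
    obtain ⟨e, rfl⟩ := hs1.exists_eq_some
    obtain _ | ⟨hs2, hrest⟩ := hπ2
    · simp at hσ
    · obtain ⟨e', rfl⟩ := hs2.exists_eq_some
      simp only [List.reduceOption_cons_of_some, List.cons.injEq] at hσ
      obtain ⟨rfl, hσ⟩ := hσ
      exact ih _ hσ (hs1.right_unique hs2 ▸ hrest)

theorem exists_reaches_of_simulation {M : MemModel Proc Var Val}
    {R : (Var → Val) → M.State → Prop}
    (hsim : ∀ m q, R m q → ∀ (l : Option (MemEv Proc Var Val)) (m' : Var → Val),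
      SCMStep Proc Var Val m l m' →
      ∃ q1 q' : M.State, M.step q l q1 ∧ TauReach M q1 q' ∧ M.Stable q' ∧ R m' q')
    {m m' : Var → Val} {σ : List (MemEv Proc Var Val)}
    (h : (SCMModel Proc Var Val).Reaches m σ m') {q : M.State} (hq : R m q) :
    ∃ q', M.Reaches q σ q' ∧ R m' q' := by
  obtain ⟨π, hπ, rfl⟩ := h
  change LTSPath (SCMStep Proc Var Val) m π m' at hπ
  induction hπ generalizing q with
  | nil => exact ⟨q, ⟨[], .nil _, rfl⟩, hq⟩
  | @cons _ _ _ l _ hs _ ih =>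
    obtain ⟨q1, q2, hstep, htau, -, hR⟩ := hsim _ _ hq _ _ hs
    obtain ⟨q', hq', hR'⟩ := ih hR
    refine ⟨q', ?_, hR'⟩
    have := ((MemModel.Reaches.of_step hstep).append (.of_tauReach htau)).append hq'
    cases l <;> simpa using this

theorem WellBehaved.exists_stable_reaches {M : MemModel Proc Var Val} (hM : WellBehaved M)
    {σ0 σ1 σ2 : List (MemEv Proc Var Val)}
    (h1 : σ0 ++ σ1 ∈ (SCMModel Proc Var Val).OTraces (SCMModel Proc Var Val).init)
    (h2 : σ0 ++ σ2 ∈ (SCMModel Proc Var Val).OTraces (SCMModel Proc Var Val).init) :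
    ∃ q0, M.Stable q0 ∧ M.Reaches M.init σ0 q0 ∧ σ1 ∈ M.OTraces q0 ∧ σ2 ∈ M.OTraces q0 := by
  obtain ⟨R, hstable, hinit, hsim⟩ := hM
  obtain ⟨_, h1⟩ := MemModel.mem_oTraces_iff.mp h1
  obtain ⟨_, h2⟩ := MemModel.mem_oTraces_iff.mp h2
  obtain ⟨m0, h01, h1⟩ := h1.exists_of_append
  obtain ⟨m0', h02, h2⟩ := h2.exists_of_append
  obtain rfl := SCMModel.reaches_unique h01 h02
  obtain ⟨q0, hq0, hR⟩ := exists_reaches_of_simulation hsim h01 hinit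
  obtain ⟨_, hq1, -⟩ := exists_reaches_of_simulation hsim h1 hR
  obtain ⟨_, hq2, -⟩ := exists_reaches_of_simulation hsim h2 hR
  exact ⟨q0, hstable _ _ hR, hq0, hq1.mem_oTraces, hq2.mem_oTraces⟩

end Memory

section Merge

variable {Proc Var Val Op Ret : Type} [DecidableEq Proc] {I : Impl Proc Var Val Op Ret}

theorem exists_idle_run_of_append {π0 π : List (Ev Proc Var Val Op Ret)}
    (h : π0 ++ π ∈ ImplTraces I) (h0 : CompleteSeq (restrictObj π0)) (p : Proc) :
    ∃ b, LTSPath (ProcStep p) true (π ↾ p) b := by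
  obtain ⟨t, ht⟩ := mem_implTraces_iff.mp h p
  rw [List.filter_append] at ht
  obtain ⟨s, hs0, hs⟩ := ht.exists_of_append
  have hidle : s.isNone = true := (hs0.map Option.isNone fun _ _ _ => SIPStep.procStep)
    |>.procStep_idle_of_completeSeq (restrictObj_filter π0 p ▸ h0.filter p)
  exact ⟨_, hidle ▸ hs.map Option.isNone fun _ _ _ => SIPStep.procStep⟩

theorem procsEv_eq_procsObj_restrictObj {π : List (Ev Proc Var Val Op Ret)}
    (hrun : ∀ p, ∃ b, LTSPath (ProcStep p) true (π ↾ p) b) :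
    procsEv π = procsObj (restrictObj π) := by
  ext p
  obtain ⟨b, hb⟩ := hrun p
  rw [← not_iff_not, ← filter_eq_nil_iff_notMem_procsEv, ← filter_eq_nil_iff_notMem_procsObj,
    ← restrictObj_filter π p]
  exact ⟨fun h => by rw [h]; rfl, not_imp_not.mp (hb.restrictObj_ne_nil_of_idle ·)⟩

theorem exists_extension_of_availableAfter [DecidableEq Var] [Zero Val]
    {π0 : List (Ev Proc Var Val Op Ret)} {h hseq : List (ObjEv Proc Op Ret)}
    (hπ0 : π0 ∈ ImplTraces I) (hcs0 : CompleteSeq (restrictObj π0))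
    (hmem0 : restrictMem π0 ∈ (SCMModel Proc Var Val).OTraces (SCMModel Proc Var Val).init)
    (hlin : Reorder linRel h hseq) (havail : AvailableAfter I (restrictObj π0) hseq) :
    ∃ π, π0 ++ π ∈ ImplTraces I ∧ restrictObj π = h ∧
      restrictMem π0 ++ restrictMem π ∈
        (SCMModel Proc Var Val).OTraces (SCMModel Proc Var Val).init ∧
      procsEv π = procsObj h := by
  obtain ⟨πa, hta, rfl, hmema⟩ := havail π0 hπ0 hmem0 rfl
  have hidle := exists_idle_run_of_append hta hcs0
  obtain ⟨π, hf, hm, rfl⟩ := exists_reschedule πa h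
    (fun p => let ⟨b, hb⟩ := hidle p; ⟨true, b, hb⟩) hlin
  refine ⟨π, mem_implTraces_of_forall_filter fun p => ⟨π0 ++ πa, hta, ?_⟩, rfl,
    by rwa [hm, ← restrictMem_append], procsEv_eq_procsObj_restrictObj fun p => hf p ▸ hidle p⟩
  rw [List.filter_append, List.filter_append, hf]

theorem linInto_of_shuffle {M : MemModel Proc Var Val} {Spec : Set (List (ObjEv Proc Op Ret))}
    (hcons : Consistent I M Spec) {π0 c : List (Ev Proc Var Val Op Ret)}
    {h1 h2 : List (ObjEv Proc Op Ret)} (hc : π0 ++ c ∈ ImplTraces I)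
    (hmem : restrictMem (π0 ++ c) ∈ M.OTraces M.init) (hcs0 : CompleteSeq (restrictObj π0))
    (hc1 : CompleteH h1) (hc2 : CompleteH h2) (hdisj : ∀ p, h1 ↾ p = [] ∨ h2 ↾ p = [])
    (hsh : Shuffle h1 h2 (restrictObj c)) : LinInto Spec (restrictObj π0 ++ restrictObj c) :=
  hcons _ ⟨π0 ++ c, hc, restrictObj_append _ _, hmem⟩
    ((hc1.shuffle hc2 hdisj hsh).completeSeq_append hcs0)

theorem not_memMergeable [DecidableEq Var] [Zero Val] (strong : Bool) {M : MemModel Proc Var Val}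
    (hM : WellBehaved M) {Spec : Set (List (ObjEv Proc Op Ret))} (hcons : Consistent I M Spec)
    {π0 π1 π2 : List (Ev Proc Var Val Op Ret)} {h1 h2 : List (ObjEv Proc Op Ret)}
    (ht1 : π0 ++ π1 ∈ ImplTraces I) (ht2 : π0 ++ π2 ∈ ImplTraces I)
    (ho1 : restrictObj π1 = h1) (ho2 : restrictObj π2 = h2)
    (hm1 : restrictMem π0 ++ restrictMem π1 ∈
      (SCMModel Proc Var Val).OTraces (SCMModel Proc Var Val).init)
    (hm2 : restrictMem π0 ++ restrictMem π2 ∈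
      (SCMModel Proc Var Val).OTraces (SCMModel Proc Var Val).init)
    (hdisj : ∀ p, π1 ↾ p = [] ∨ π2 ↾ p = []) (hcs0 : CompleteSeq (restrictObj π0))
    (hc1 : CompleteH h1) (hc2 : CompleteH h2)
    (hspec : ¬ SpecMergeableAfter strong Spec (restrictObj π0) h1 h2) :
    ¬ MemMergeable strong M (restrictMem π1) (restrictMem π2) := by
  intro hmerge
  obtain ⟨q0, hst, hq0, hin1, hin2⟩ := hM.exists_stable_reaches hm1 hm2
  have hdisjH : ∀ p, h1 ↾ p = [] ∨ h2 ↾ p = [] := fun p => by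
    rw [← ho1, ← ho2, ← restrictObj_filter, ← restrictObj_filter]
    exact (hdisj p).imp (fun h => by rw [h]; rfl) (fun h => by rw [h]; rfl)
  have hlin : ∀ c, Shuffle π1 π2 c → restrictMem c ∈ M.OTraces q0 →
      LinInto Spec (restrictObj π0 ++ restrictObj c) := by
    intro c hc hmc
    refine linInto_of_shuffle hcons ?_ ?_ hcs0 hc1 hc2 hdisjH (ho1 ▸ ho2 ▸ hc.filterMap Ev.toObj)
    · exact mem_implTraces_append_of_shuffle ht1 ht2 hdisj hc
    · obtain ⟨_, hreach⟩ := MemModel.mem_oTraces_iff.mp hmc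
      rw [restrictMem_append]
      exact (hq0.append hreach).mem_oTraces
  cases strong
  · obtain ⟨σ, hσ, hσM⟩ := (hmerge : WeaklyMergeable M _ _) q0 hst hin1 hin2
    obtain ⟨c, hc, rfl⟩ := hσ.exists_filterMap_eq Ev.toMem rfl rfl
    exact hspec fun _ _ => ⟨restrictObj c, ho1 ▸ ho2 ▸ hc.filterMap Ev.toObj, hlin c hc hσM⟩
  · refine hspec fun _ _ h hh => ?_
    obtain ⟨c, hc, rfl⟩ := hh.exists_filterMap_eq Ev.toObj ho1 ho2
    exact hlin c hc ((hmerge : StronglyMergeable M _ _) q0 hst hin1 hin2 _ (hc.filterMap Ev.toMem))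

end Merge

theorem merge_theorem_general (Proc Var Val Op Ret : Type) [DecidableEq Proc]
    [DecidableEq Var] [Zero Val]
    (strong : Bool)
    (M : MemModel Proc Var Val) (hM : WellBehaved M)
    (I : Impl Proc Var Val Op Ret)
    (Spec : Set (List (ObjEv Proc Op Ret))) (hSpec : IsSpec Spec)
    (hcons : Consistent I M Spec)
    (π0 : List (Ev Proc Var Val Op Ret)) (h1 h2 : List (ObjEv Proc Op Ret))
    (hπ0 : π0 ∈ ImplTraces I)
    (hc1 : CompleteH h1) (hc2 : CompleteH h2)
    (hi1 : restrictObj π0 ∈ Spec)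
    (hi2 : restrictMem π0 ∈ (SCMModel Proc Var Val).OTraces (SCMModel Proc Var Val).init)
    (hi3 : procsObj h1 ∩ procsObj h2 = ∅)
    (hii1 : ∃ hseq : List (ObjEv Proc Op Ret),
      CompleteSeq hseq ∧ Reorder linRel h1 hseq ∧ AvailableAfter I (restrictObj π0) hseq)
    (hii2 : ∃ hseq : List (ObjEv Proc Op Ret),
      CompleteSeq hseq ∧ Reorder linRel h2 hseq ∧ AvailableAfter I (restrictObj π0) hseq)
    (hiii : ¬ SpecMergeableAfter strong Spec (restrictObj π0) h1 h2) :
    ∃ π1 π2 : List (Ev Proc Var Val Op Ret),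
      (π0 ++ π1 ∈ ImplTraces I ∧ restrictObj π1 = h1 ∧
        restrictMem π0 ++ restrictMem π1 ∈
          (SCMModel Proc Var Val).OTraces (SCMModel Proc Var Val).init ∧
        procsEv π1 = procsObj h1) ∧
      (π0 ++ π2 ∈ ImplTraces I ∧ restrictObj π2 = h2 ∧
        restrictMem π0 ++ restrictMem π2 ∈
          (SCMModel Proc Var Val).OTraces (SCMModel Proc Var Val).init ∧
        procsEv π2 = procsObj h2) ∧
      (∀ π1' π2' : List (Ev Proc Var Val Op Ret),
        Reorder sprocEv π1 π1' → Reorder sprocEv π2 π2' →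
        restrictObj π1' = h1 → restrictObj π2' = h2 →
        restrictMem π0 ++ restrictMem π1' ∈
          (SCMModel Proc Var Val).OTraces (SCMModel Proc Var Val).init →
        restrictMem π0 ++ restrictMem π2' ∈
          (SCMModel Proc Var Val).OTraces (SCMModel Proc Var Val).init →
        ¬ MemMergeable strong M (restrictMem π1') (restrictMem π2')) ∧
      ¬ MemMergeable strong M (restrictMem π1) (restrictMem π2) := by
  obtain ⟨_, -, hlin1, havail1⟩ := hii1
  obtain ⟨_, -, hlin2, havail2⟩ := hii2
  have hcs0 := hSpec.1 _ hi1
  obtain ⟨π1, ht1, ho1, hm1, hp1⟩ := exists_extension_of_availableAfter hπ0 hcs0 hi2 hlin1 havail1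
  obtain ⟨π2, ht2, ho2, hm2, hp2⟩ := exists_extension_of_availableAfter hπ0 hcs0 hi2 hlin2 havail2
  have hdisj : ∀ p, π1 ↾ p = [] ∨ π2 ↾ p = [] := fun p => by
    simp only [filter_eq_nil_iff_notMem_procsEv, hp1, hp2, ← not_and_or]
    exact Set.eq_empty_iff_forall_notMem.mp hi3 p
  refine ⟨π1, π2, ⟨ht1, ho1, hm1, hp1⟩, ⟨ht2, ho2, hm2, hp2⟩, ?_,
    not_memMergeable strong hM hcons ht1 ht2 ho1 ho2 hm1 hm2 hdisj hcs0 hc1 hc2 hiii⟩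
  intro π1' π2' hr1 hr2 ho1' ho2' hm1' hm2'
  refine not_memMergeable strong hM hcons (mem_implTraces_append_of_reorder ht1 hr1)
    (mem_implTraces_append_of_reorder ht2 hr2) ho1' ho2' hm1' hm2' (fun p => ?_) hcs0 hc1 hc2 hiii
  rw [hr1.filter_eq_of_sprocEv, hr2.filter_eq_of_sprocEv]
  exact hdisj p

/-- Merge Theorem: non-mergeable object histories can only be generated
by non-mergeable memory traces (both weak and strong versions, selected by `strong`). -/
theorem merge_theorem (Proc Var Val Op Ret : Type) [Fintype Proc] [DecidableEq Proc]
    [DecidableEq Var] [Zero Val]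
    (strong : Bool)
    (M : MemModel Proc Var Val) (hM : WellBehaved M)
    (I : Impl Proc Var Val Op Ret)
    (Spec : Set (List (ObjEv Proc Op Ret))) (hSpec : IsSpec Spec)
    (hcons : Consistent I M Spec)
    (π0 : List (Ev Proc Var Val Op Ret)) (h1 h2 : List (ObjEv Proc Op Ret))
    (hπ0 : π0 ∈ ImplTraces I)
    (hc1 : CompleteH h1) (hc2 : CompleteH h2)
    (hi1 : restrictObj π0 ∈ Spec)
    (hi2 : restrictMem π0 ∈ (SCMModel Proc Var Val).OTraces (SCMModel Proc Var Val).init)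
    (hi3 : procsObj h1 ∩ procsObj h2 = ∅)
    (hii1 : ∃ hseq : List (ObjEv Proc Op Ret),
      CompleteSeq hseq ∧ Reorder linRel h1 hseq ∧ AvailableAfter I (restrictObj π0) hseq)
    (hii2 : ∃ hseq : List (ObjEv Proc Op Ret),
      CompleteSeq hseq ∧ Reorder linRel h2 hseq ∧ AvailableAfter I (restrictObj π0) hseq)
    (hiii : ¬ SpecMergeableAfter strong Spec (restrictObj π0) h1 h2) :
    ∃ π1 π2 : List (Ev Proc Var Val Op Ret),
      (π0 ++ π1 ∈ ImplTraces I ∧ restrictObj π1 = h1 ∧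
        restrictMem π0 ++ restrictMem π1 ∈
          (SCMModel Proc Var Val).OTraces (SCMModel Proc Var Val).init ∧
        procsEv π1 = procsObj h1) ∧
      (π0 ++ π2 ∈ ImplTraces I ∧ restrictObj π2 = h2 ∧
        restrictMem π0 ++ restrictMem π2 ∈
          (SCMModel Proc Var Val).OTraces (SCMModel Proc Var Val).init ∧
        procsEv π2 = procsObj h2) ∧
      (∀ π1' π2' : List (Ev Proc Var Val Op Ret),
        Reorder sprocEv π1 π1' → Reorder sprocEv π2 π2' →
        restrictObj π1' = h1 → restrictObj π2' = h2 →
        restrictMem π0 ++ restrictMem π1' ∈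
          (SCMModel Proc Var Val).OTraces (SCMModel Proc Var Val).init →
        restrictMem π0 ++ restrictMem π2' ∈
          (SCMModel Proc Var Val).OTraces (SCMModel Proc Var Val).init →
        ¬ MemMergeable strong M (restrictMem π1') (restrictMem π2')) ∧
      ¬ MemMergeable strong M (restrictMem π1) (restrictMem π2) :=
  merge_theorem_general Proc Var Val Op Ret strong M hM I Spec hSpec hcons π0 h1 h2 hπ0 hc1 hc2 hi1
    hi2 hi3 hii1 hii2 hiii

end WMM
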